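/- For every nonnegative rate vector λ = (λ_1,…,λ_k), every n ∈ ℕ₀, and every t ≥ 0, the GCP probability mass function satisfies the forward Kolmogorov equation d/dt p(λ; n, t) = −( Σ_{j=1}^{k} λ_j ) p(λ; n, t) + Σ_{j=1}^{k} λ_j p(λ; n−j, t), where p(λ; m, t) is taken to be 0 for m < 0, with initial conditions p(λ; 0, 0) = 1 and p(λ; n, 0) = 0 for n ≥ 1. -/

import Mathlib

open Finset

/-- The set `Ω(k, n)` of tuples `x : Fin k → ℕ` with `∑_{j=1}^k j * x_j = n`
(`j : Fin k` represents the jump size `j + 1`). -/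
def gcpOmega (k n : ℕ) : Finset (Fin k → ℕ) :=
  (Fintype.piFinset fun _ : Fin k => Finset.range (n + 1)).filter
    fun x => ∑ j : Fin k, (j.1 + 1) * x j = n

/-- The probability mass function of the generalized counting process with jump
rates `lam j` for jumps of size `j + 1`, evaluated at state `n` and time `t`. -/
noncomputable def gcpPMF (k : ℕ) (lam : Fin k → ℝ) (n : ℕ) (t : ℝ) : ℝ :=
  ∑ x ∈ gcpOmega k n,
    ∏ j : Fin k, (lam j * t) ^ (x j) / (Nat.factorial (x j)) * Real.exp (-(lam j * t))


/-!
Each summand of `p(n, t)` is a product `P_x(t) = ∏_j w_{x_j}(λ_j t)` of Poisson weights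
`w_m(u) = u^m / m! · e^{-u}`, and `w_m' = w_{m-1} - w_m` (with `w_{-1} = 0`). By the product rule
`P_x' = ∑_j λ_j (P_{x - e_j} - P_x)`, the first term being present only when `x_j ≠ 0`. Summed over
`Ω(k, n)`, the terms `-λ_j P_x` give `-(∑ λ_j) p(n, t)`, and since `x ↦ x - e_j` maps
`{x ∈ Ω(k, n) | x_j ≠ 0}` bijectively onto `Ω(k, n - j)`, the terms `λ_j P_{x - e_j}` give
`λ_j p(n - j, t)`.
-/

noncomputable def poissonTerm (u : ℝ) (m : ℕ) : ℝ :=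
  u ^ m / m.factorial * Real.exp (-u)

theorem poissonTerm_zero_left (m : ℕ) : poissonTerm 0 m = if m = 0 then 1 else 0 := by
  rcases eq_or_ne m 0 with rfl | hm <;> simp [poissonTerm, *]

theorem hasDerivAt_poissonTerm (u : ℝ) (m : ℕ) :
    HasDerivAt (poissonTerm · m)
      ((if m ≠ 0 then poissonTerm u (m - 1) else 0) - poissonTerm u m) u := by
  cases m with
  | zero => simpa [poissonTerm] using (hasDerivAt_neg u).exp
  | succ m =>
    have hpow : HasDerivAt (fun v => v ^ (m + 1) / ((m + 1).factorial : ℝ))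
        (u ^ m / m.factorial) u :=
      ((hasDerivAt_pow (m + 1) u).div_const _).congr_deriv (by
        rw [Nat.factorial_succ, Nat.add_sub_cancel]
        push_cast
        field_simp)
    refine (hpow.mul (hasDerivAt_neg u).exp).congr_deriv ?_
    rw [if_pos m.succ_ne_zero, Nat.add_sub_cancel]
    simp only [poissonTerm]
    ring

theorem hasDerivAt_prod_poissonTerm {ι : Type*} [Fintype ι] [DecidableEq ι]
    (c : ι → ℝ) (x : ι → ℕ) (t : ℝ) :
    HasDerivAt (fun s => ∏ i, poissonTerm (c i * s) (x i))
      (∑ j, c j * ((if x j ≠ 0 then ∏ i, poissonTerm (c i * t) ((x - Pi.single j 1 : ι → ℕ) i)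
          else 0) - ∏ i, poissonTerm (c i * t) (x i))) t := by
  have hfactor (j : ι) : HasDerivAt (fun s => poissonTerm (c j * s) (x j))
      (((if x j ≠ 0 then poissonTerm (c j * t) (x j - 1) else 0) - poissonTerm (c j * t) (x j))
        * c j) t :=
    (hasDerivAt_poissonTerm _ _).comp t (hasDerivAt_const_mul (c j))
  refine (HasDerivAt.fun_finsetProd fun j _ => hfactor j).congr_deriv
    (sum_congr rfl fun j _ => ?_)
  have hrest : ∏ i ∈ univ.erase j, poissonTerm (c i * t) ((x - Pi.single j 1 : ι → ℕ) i)
      = ∏ i ∈ univ.erase j, poissonTerm (c i * t) (x i) :=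
    prod_congr rfl fun i hi => by simp [ne_of_mem_erase hi]
  rw [← mul_prod_erase _ _ (mem_univ j),
    ← mul_prod_erase _ _ (mem_univ j), hrest, smul_eq_mul]
  split_ifs <;> simp <;> ring

theorem mem_gcpOmega {k n : ℕ} {x : Fin k → ℕ} :
    x ∈ gcpOmega k n ↔ ∑ j : Fin k, (j.1 + 1) * x j = n := by
  refine ⟨fun h => (mem_filter.mp h).2, fun h => mem_filter.mpr ⟨?_, h⟩⟩
  refine Fintype.mem_piFinset.mpr fun j => mem_range.mpr ?_
  have hle : (j.1 + 1) * x j ≤ n :=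
    h ▸ single_le_sum (f := fun j : Fin k => (j.1 + 1) * x j) (by simp) (mem_univ j)
  nlinarith

theorem succ_le_of_mem_gcpOmega {k n : ℕ} {x : Fin k → ℕ} (hx : x ∈ gcpOmega k n) {i : Fin k}
    (hi : x i ≠ 0) : i.1 + 1 ≤ n := by
  have hle : (i.1 + 1) * x i ≤ n := mem_gcpOmega.mp hx ▸
    single_le_sum (f := fun j : Fin k => (j.1 + 1) * x j) (by simp) (mem_univ i)
  nlinarith [Nat.one_le_iff_ne_zero.mpr hi]

theorem sum_succ_mul_add_single {k : ℕ} (x : Fin k → ℕ) (i : Fin k) :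
    ∑ j : Fin k, (j.1 + 1) * (x + Pi.single i 1 : Fin k → ℕ) j
      = ∑ j : Fin k, (j.1 + 1) * x j + (i.1 + 1) := by
  simp [mul_add, sum_add_distrib, Pi.single_apply]

theorem gcpOmega_filter_ne_zero {k n : ℕ} {i : Fin k} (hi : i.1 + 1 ≤ n) :
    (gcpOmega k n).filter (fun x => x i ≠ 0)
      = (gcpOmega k (n - (i.1 + 1))).image (· + Pi.single i 1) := by
  ext x
  simp only [mem_filter, mem_image, mem_gcpOmega]
  constructor
  · rintro ⟨hx, hxi⟩
    have hsingle : Pi.single i 1 ≤ x := fun j => by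
      rcases eq_or_ne j i with rfl | hj <;> simp [*, Nat.one_le_iff_ne_zero]
    refine ⟨x - Pi.single i 1, ?_, tsub_add_cancel_of_le hsingle⟩
    have hweight := sum_succ_mul_add_single (x - Pi.single i 1) i
    rw [tsub_add_cancel_of_le hsingle] at hweight
    omega
  · rintro ⟨y, hy, rfl⟩
    refine ⟨?_, by simp⟩
    rw [sum_succ_mul_add_single, hy]
    omega

theorem sum_gcpOmega_sub_single {M : Type*} [AddCommMonoid M] (k n : ℕ) (i : Fin k)
    (F : (Fin k → ℕ) → M) :
    ∑ x ∈ gcpOmega k n, (if x i ≠ 0 then F (x - Pi.single i 1) else 0)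
      = if i.1 + 1 ≤ n then ∑ y ∈ gcpOmega k (n - (i.1 + 1)), F y else 0 := by
  rw [← sum_filter]
  split_ifs with hi
  · rw [gcpOmega_filter_ne_zero hi, sum_image fun _ _ _ _ => add_right_cancel]
    simp
  · exact sum_eq_zero fun x hx =>
      absurd (succ_le_of_mem_gcpOmega (mem_filter.1 hx).1 (mem_filter.1 hx).2) hi

theorem gcpPMF_eq_sum_prod_poissonTerm (k : ℕ) (lam : Fin k → ℝ) (n : ℕ) (t : ℝ) :
    gcpPMF k lam n t = ∑ x ∈ gcpOmega k n, ∏ j, poissonTerm (lam j * t) (x j) :=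
  rfl

theorem gcpPMF_zero_time (k : ℕ) (lam : Fin k → ℝ) (n : ℕ) :
    gcpPMF k lam n 0 = if n = 0 then 1 else 0 := by
  simp only [gcpPMF_eq_sum_prod_poissonTerm, mul_zero, poissonTerm_zero_left, Fintype.prod_boole,
    ← funext_iff, sum_ite_eq']
  simp [mem_gcpOmega, eq_comm]

theorem hasDerivAt_gcpPMF (k : ℕ) (lam : Fin k → ℝ) (n : ℕ) (t : ℝ) :
    HasDerivAt (fun s => gcpPMF k lam n s)
      (-(∑ j : Fin k, lam j) * gcpPMF k lam n t
        + ∑ j : Fin k, lam j *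
            (if j.1 + 1 ≤ n then gcpPMF k lam (n - (j.1 + 1)) t else 0)) t := by
  have hshift (j : Fin k) :
      ∑ x ∈ gcpOmega k n,
          (if x j ≠ 0 then ∏ i, poissonTerm (lam i * t) ((x - Pi.single j 1 : Fin k → ℕ) i) else 0)
        = if j.1 + 1 ≤ n then gcpPMF k lam (n - (j.1 + 1)) t else 0 :=
    sum_gcpOmega_sub_single k n j fun y => ∏ i, poissonTerm (lam i * t) (y i)
  refine (HasDerivAt.fun_sum fun x _ => hasDerivAt_prod_poissonTerm lam x t).congr_deriv ?_
  rw [sum_comm]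
  simp only [mul_sub, sum_sub_distrib, ← mul_sum, hshift, ← sum_mul,
    ← gcpPMF_eq_sum_prod_poissonTerm]
  ring

theorem gcpPMF_kolmogorov_forward_general (k : ℕ) (lam : Fin k → ℝ) :
    (∀ (n : ℕ) (t : ℝ), 0 ≤ t →
      HasDerivAt (fun s => gcpPMF k lam n s)
        (-(∑ j : Fin k, lam j) * gcpPMF k lam n t
          + ∑ j : Fin k, lam j *
              (if j.1 + 1 ≤ n then gcpPMF k lam (n - (j.1 + 1)) t else 0)) t) ∧
    gcpPMF k lam 0 0 = 1 ∧ (∀ n : ℕ, 1 ≤ n → gcpPMF k lam n 0 = 0) :=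
  ⟨fun n t _ => hasDerivAt_gcpPMF k lam n t, by simp [gcpPMF_zero_time],
    fun n hn => by simp [gcpPMF_zero_time, Nat.one_le_iff_ne_zero.mp hn]⟩

/-- The GCP pmf satisfies the forward Kolmogorov system of differential equations
`p'(n,t) = −(Σ_j λ_j) p(n,t) + Σ_j λ_j p(n−j, t)` (terms with negative index vanish),
with initial conditions `p(0,0) = 1` and `p(n,0) = 0` for `n ≥ 1`. -/
theorem gcpPMF_kolmogorov_forward (k : ℕ) (hk : 1 ≤ k) (lam : Fin k → ℝ)
    (hlam : ∀ j, 0 ≤ lam j) :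
    (∀ (n : ℕ) (t : ℝ), 0 ≤ t →
      HasDerivAt (fun s => gcpPMF k lam n s)
        (-(∑ j : Fin k, lam j) * gcpPMF k lam n t
          + ∑ j : Fin k, lam j *
              (if j.1 + 1 ≤ n then gcpPMF k lam (n - (j.1 + 1)) t else 0)) t) ∧
    gcpPMF k lam 0 0 = 1 ∧ (∀ n : ℕ, 1 ≤ n → gcpPMF k lam n 0 = 0) :=
  gcpPMF_kolmogorov_forward_general k lam
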